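/- Let K > 0, λ ∈ ℝ, ξ ≠ 0. Let a : ℝ → (0,∞) be twice continuously differentiable satisfying the Emden equation a''(t) = −λ/a(t) + ξ²/a(t)³, and let f : [0,∞) → ℝ be twice continuously differentiable with f'(0) = 0 satisfying the Liouville equation f''(s) + f'(s)/s + (2π/K)·e^{f(s)} = 2λ/K for s > 0. Define, with r = √(x²+y²), ρ(t,x,y) = e^{f(r/a(t))}/a(t)², u₁ = (a'(t)/a(t))·x − (ξ/a(t)²)·y, u₂ = (ξ/a(t)²)·x + (a'(t)/a(t))·y. Then (ρ, u₁, u₂) is a classical solution of the two-dimensional isothermal Euler–Poisson system at every point with r > 0: the continuity equation ∂ρ/∂t + ∂(ρu₁)/∂x + ∂(ρu₂)/∂y = 0 holds, and both momentum equations ρ·(∂uᵢ/∂t + u₁·∂uᵢ/∂x + u₂·∂uᵢ/∂y) + ∂(Kρ)/∂xᵢ + ρ·(xᵢ/r²)·2π·∫₀ʳ ρ(t,η)·η dη = 0 hold for i = 1, 2 (with x₁ = x, x₂ = y). -/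

import Mathlib

open Real

/-- The planar radius `r = √(x² + y²)`. -/
noncomputable def rad (x y : ℝ) : ℝ := Real.sqrt (x ^ 2 + y ^ 2)

/-!
Write `s = r / a` and `H = a' / a`. Mass conservation holds for every profile `g` in
`ρ = g(s) / a²`: the scaling gives `∂ₜρ = -H (r ∂ᵣρ + 2ρ)`, which is cancelled by
`u·∇ρ + ρ div u = H r ∂ᵣρ + 2Hρ`, since the rotational part of `u` is tangent to circles.
The material derivative of the linear field `u` is `(a''/a - ξ²/a⁴) x`, which the Emden
equation turns into `-(λ/a²) x`. Multiplying the Liouville equation by `K s` gives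
`(λ s² - K s f'(s))' = 2π e^{f(s)} s`, so the enclosed mass is
`2π ∫₀ʳ ρ η dη = λ s² - K s f'(s)`; with it, pressure and gravity exactly supply the
acceleration `-(λ/a²) x`.
-/

open Set

theorem rad_sq (x y : ℝ) : rad x y ^ 2 = x ^ 2 + y ^ 2 :=
  sq_sqrt (by positivity)

theorem hasDerivAt_rad_left {x y : ℝ} (hr : rad x y ≠ 0) :
    HasDerivAt (fun χ => rad χ y) (x / rad x y) x := by
  have hxy : x ^ 2 + y ^ 2 ≠ 0 := fun h => hr (by rw [rad, h, sqrt_zero])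
  have h := ((hasDerivAt_pow 2 x).add_const (y ^ 2)).sqrt hxy
  unfold rad
  convert h using 1
  norm_num
  field_simp

theorem hasDerivAt_rad_right {x y : ℝ} (hr : rad x y ≠ 0) :
    HasDerivAt (fun υ => rad x υ) (y / rad x y) y := by
  have hxy : x ^ 2 + y ^ 2 ≠ 0 := fun h => hr (by rw [rad, h, sqrt_zero])
  have h := ((hasDerivAt_pow 2 y).const_add (x ^ 2)).sqrt hxy
  unfold rad
  convert h using 1
  norm_num
  field_simp

theorem liouville_first_integral {K lam : ℝ} {f f' f'' : ℝ → ℝ} (hK : K ≠ 0)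
    (hfc : ContinuousOn f (Ici 0)) (hf'c : ContinuousOn f' (Ici 0))
    (hfd' : ∀ s ∈ Ioi (0 : ℝ), HasDerivAt f' (f'' s) s)
    (hfode : ∀ s ∈ Ioi (0 : ℝ),
      f'' s + f' s / s + (2 * π / K) * exp (f s) = 2 * lam / K)
    {s : ℝ} (hs : 0 ≤ s) :
    2 * π * ∫ σ in (0 : ℝ)..s, exp (f σ) * σ = lam * s ^ 2 - K * (s * f' s) := by
  have hderiv : ∀ σ ∈ Ioo 0 s, HasDerivAt (fun σ => lam * σ ^ 2 - K * (σ * f' σ))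
      (2 * π * (exp (f σ) * σ)) σ := by
    intro σ hσ
    refine (((hasDerivAt_pow 2 σ).const_mul lam).sub
      (((hasDerivAt_id' σ).mul (hfd' σ hσ.1)).const_mul K)).congr_deriv ?_
    have hode := hfode σ hσ.1
    field_simp [hσ.1.ne'] at hode
    linear_combination -hode
  have hcont : ContinuousOn (fun σ => lam * σ ^ 2 - K * (σ * f' σ)) (Icc 0 s) := by
    have hf'c₀ : ContinuousOn f' (Icc 0 s) := hf'c.mono Icc_subset_Ici_self
    fun_prop
  have hint : IntervalIntegrable (fun σ => 2 * π * (exp (f σ) * σ)) MeasureTheory.volume 0 s := by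
    have hfc₀ : ContinuousOn f (Icc 0 s) := hfc.mono Icc_subset_Ici_self
    exact ContinuousOn.intervalIntegrable (by rw [uIcc_of_le hs]; fun_prop)
  rw [← intervalIntegral.integral_const_mul,
    intervalIntegral.integral_eq_sub_of_hasDerivAt_of_le hs hcont hderiv hint]
  ring

theorem integral_scaled_profile_mul_id (g : ℝ → ℝ) {c : ℝ} (hc : c ≠ 0) (r : ℝ) :
    ∫ η in (0 : ℝ)..r, g (η / c) / c ^ 2 * η = ∫ σ in (0 : ℝ)..r / c, g σ * σ := by
  have hfun : (fun η => g (η / c) / c ^ 2 * η) = fun η => c⁻¹ * (g (η / c) * (η / c)) := by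
    funext η
    field_simp
  rw [hfun, intervalIntegral.integral_const_mul, ← smul_eq_mul,
    intervalIntegral.inv_smul_integral_comp_div (f := fun σ => g σ * σ), zero_div]

section ScaledProfile

variable {g : ℝ → ℝ} {g' : ℝ}

theorem hasDerivAt_scaled_profile_radius {A r : ℝ} (hg : HasDerivAt g g' (r / A)) :
    HasDerivAt (fun r => g (r / A) / A ^ 2) (g' / A ^ 3) r := by
  refine ((hg.comp r ((hasDerivAt_id' r).div_const A)).div_const (A ^ 2)).congr_deriv ?_
  ring

theorem hasDerivAt_scaled_profile_time {a : ℝ → ℝ} {a' r t : ℝ}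
    (hg : HasDerivAt g g' (r / a t)) (ha : HasDerivAt a a' t) (hat : a t ≠ 0) :
    HasDerivAt (fun τ => g (r / a τ) / a τ ^ 2)
      (-(a' / a t) * (r * g' / a t ^ 3 + 2 * (g (r / a t) / a t ^ 2))) t := by
  refine ((hg.comp t ((hasDerivAt_const t r).fun_div ha hat)).fun_div (ha.fun_pow 2)
    (pow_ne_zero 2 hat)).congr_deriv ?_
  simp only [Function.comp_apply]
  field_simp
  ring

variable {A x y : ℝ}

theorem hasDerivAt_scaled_density_left (hg : HasDerivAt g g' (rad x y / A)) (hr : rad x y ≠ 0) :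
    HasDerivAt (fun χ => g (rad χ y / A) / A ^ 2) (g' / A ^ 3 * (x / rad x y)) x :=
  HasDerivAt.comp x (hasDerivAt_scaled_profile_radius hg) (hasDerivAt_rad_left hr)

theorem hasDerivAt_scaled_density_right (hg : HasDerivAt g g' (rad x y / A))
    (hr : rad x y ≠ 0) :
    HasDerivAt (fun υ => g (rad x υ / A) / A ^ 2) (g' / A ^ 3 * (y / rad x y)) y :=
  HasDerivAt.comp y (hasDerivAt_scaled_profile_radius hg) (hasDerivAt_rad_right hr)

theorem continuity_equation_scaled_profile {a : ℝ → ℝ} {a' t : ℝ} (ξ : ℝ)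
    (hg : HasDerivAt g g' (rad x y / a t)) (ha : HasDerivAt a a' t) (hat : a t ≠ 0)
    (hr : rad x y ≠ 0) :
    deriv (fun τ => g (rad x y / a τ) / a τ ^ 2) t
      + deriv (fun χ => g (rad χ y / a t) / a t ^ 2 * (a' / a t * χ - ξ / a t ^ 2 * y)) x
      + deriv (fun υ => g (rad x υ / a t) / a t ^ 2 * (ξ / a t ^ 2 * x + a' / a t * υ)) y
      = 0 := by
  rw [(hasDerivAt_scaled_profile_time hg ha hat).deriv,
    ((hasDerivAt_scaled_density_left hg hr).fun_mul
      (((hasDerivAt_id' x).const_mul _).sub_const _)).deriv,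
    ((hasDerivAt_scaled_density_right hg hr).fun_mul
      (((hasDerivAt_id' y).const_mul _).const_add _)).deriv]
  field_simp
  linear_combination -(a' * g' * a t) * rad_sq x y

end ScaledProfile

section RotatingVelocity

variable {a b : ℝ → ℝ} {b' t : ℝ}

theorem hasDerivAt_expansion_rate (ha : HasDerivAt a (b t) t) (hb : HasDerivAt b b' t)
    (hat : a t ≠ 0) : HasDerivAt (fun τ => b τ / a τ) (b' / a t - (b t / a t) ^ 2) t := by
  refine (hb.fun_div ha hat).congr_deriv ?_
  field_simp

theorem hasDerivAt_const_div_sq (ξ : ℝ) (ha : HasDerivAt a (b t) t) (hat : a t ≠ 0) :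
    HasDerivAt (fun τ => ξ / a τ ^ 2) (-2 * (b t / a t) * (ξ / a t ^ 2)) t := by
  refine ((hasDerivAt_const t ξ).fun_div (ha.fun_pow 2) (pow_ne_zero 2 hat)).congr_deriv ?_
  field_simp
  ring

theorem material_derivative_rotating_velocity_fst (ξ x y : ℝ) (ha : HasDerivAt a (b t) t)
    (hb : HasDerivAt b b' t) (hat : a t ≠ 0) :
    deriv (fun τ => b τ / a τ * x - ξ / a τ ^ 2 * y) t
      + (b t / a t * x - ξ / a t ^ 2 * y) * deriv (fun χ => b t / a t * χ - ξ / a t ^ 2 * y) x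
      + (ξ / a t ^ 2 * x + b t / a t * y) * deriv (fun υ => b t / a t * x - ξ / a t ^ 2 * υ) y
      = (b' / a t - ξ ^ 2 / a t ^ 4) * x := by
  rw [(((hasDerivAt_expansion_rate ha hb hat).mul_const x).fun_sub
      ((hasDerivAt_const_div_sq ξ ha hat).mul_const y)).deriv,
    (((hasDerivAt_id' x).const_mul _).sub_const _).deriv,
    (((hasDerivAt_id' y).const_mul _).const_sub _).deriv]
  field_simp
  ring

theorem material_derivative_rotating_velocity_snd (ξ x y : ℝ) (ha : HasDerivAt a (b t) t)
    (hb : HasDerivAt b b' t) (hat : a t ≠ 0) :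
    deriv (fun τ => ξ / a τ ^ 2 * x + b τ / a τ * y) t
      + (b t / a t * x - ξ / a t ^ 2 * y) * deriv (fun χ => ξ / a t ^ 2 * χ + b t / a t * y) x
      + (ξ / a t ^ 2 * x + b t / a t * y) * deriv (fun υ => ξ / a t ^ 2 * x + b t / a t * υ) y
      = (b' / a t - ξ ^ 2 / a t ^ 4) * y := by
  rw [(((hasDerivAt_const_div_sq ξ ha hat).mul_const x).fun_add
      ((hasDerivAt_expansion_rate ha hb hat).mul_const y)).deriv,
    (((hasDerivAt_id' x).const_mul _).add_const _).deriv,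
    (((hasDerivAt_id' y).const_mul _).const_add _).deriv]
  field_simp
  ring

end RotatingVelocity

section Momentum

variable {K lam ξ : ℝ} {a b f f' : ℝ → ℝ} {b' t x y : ℝ}

theorem momentum_equation_fst (ha : HasDerivAt a (b t) t) (hb : HasDerivAt b b' t)
    (hat : a t ≠ 0) (hemden : b' = -lam / a t + ξ ^ 2 / a t ^ 3)
    (hf : HasDerivAt f (f' (rad x y / a t)) (rad x y / a t)) (hr : rad x y ≠ 0) :
    exp (f (rad x y / a t)) / a t ^ 2 *
        (deriv (fun τ => b τ / a τ * x - ξ / a τ ^ 2 * y) t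
          + (b t / a t * x - ξ / a t ^ 2 * y) * deriv (fun χ => b t / a t * χ - ξ / a t ^ 2 * y) x
          + (ξ / a t ^ 2 * x + b t / a t * y) * deriv (fun υ => b t / a t * x - ξ / a t ^ 2 * υ) y)
      + deriv (fun χ => K * (exp (f (rad χ y / a t)) / a t ^ 2)) x
      + exp (f (rad x y / a t)) / a t ^ 2 * (x / rad x y ^ 2)
          * (lam * (rad x y / a t) ^ 2 - K * (rad x y / a t * f' (rad x y / a t))) = 0 := by
  rw [material_derivative_rotating_velocity_fst ξ x y ha hb hat, hemden,
    ((hasDerivAt_scaled_density_left hf.exp hr).const_mul K).deriv]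
  field_simp
  ring

theorem momentum_equation_snd (ha : HasDerivAt a (b t) t) (hb : HasDerivAt b b' t)
    (hat : a t ≠ 0) (hemden : b' = -lam / a t + ξ ^ 2 / a t ^ 3)
    (hf : HasDerivAt f (f' (rad x y / a t)) (rad x y / a t)) (hr : rad x y ≠ 0) :
    exp (f (rad x y / a t)) / a t ^ 2 *
        (deriv (fun τ => ξ / a τ ^ 2 * x + b τ / a τ * y) t
          + (b t / a t * x - ξ / a t ^ 2 * y) * deriv (fun χ => ξ / a t ^ 2 * χ + b t / a t * y) x
          + (ξ / a t ^ 2 * x + b t / a t * y) * deriv (fun υ => ξ / a t ^ 2 * x + b t / a t * υ) y)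
      + deriv (fun υ => K * (exp (f (rad x υ / a t)) / a t ^ 2)) y
      + exp (f (rad x y / a t)) / a t ^ 2 * (y / rad x y ^ 2)
          * (lam * (rad x y / a t) ^ 2 - K * (rad x y / a t * f' (rad x y / a t))) = 0 := by
  rw [material_derivative_rotating_velocity_snd ξ x y ha hb hat, hemden,
    ((hasDerivAt_scaled_density_right hf.exp hr).const_mul K).deriv]
  field_simp
  ring

end Momentum

theorem rotational_solution_isothermal_euler_poisson_general
    (K lam ξ : ℝ) (hK : 0 < K)
    (a : ℝ → ℝ) (hareg : ContDiff ℝ 2 a) (hapos : ∀ t, 0 < a t)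
    (haode : ∀ t, deriv (deriv a) t = -lam / a t + ξ ^ 2 / (a t) ^ 3)
    (f f' f'' : ℝ → ℝ)
    (hfc : ContinuousOn f (Set.Ici 0))
    (hf'c : ContinuousOn f' (Set.Ici 0))
    (hfd : ∀ s ∈ Set.Ioi (0 : ℝ), HasDerivAt f (f' s) s)
    (hfd' : ∀ s ∈ Set.Ioi (0 : ℝ), HasDerivAt f' (f'' s) s)
    (hfode : ∀ s ∈ Set.Ioi (0 : ℝ),
      f'' s + f' s / s + (2 * π / K) * Real.exp (f s) = 2 * lam / K)
    (ρrad : ℝ → ℝ → ℝ) (ρ u₁ u₂ : ℝ → ℝ → ℝ → ℝ)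
    (hρrad : ∀ t r, ρrad t r = Real.exp (f (r / a t)) / (a t) ^ 2)
    (hρ : ∀ t x y, ρ t x y = ρrad t (rad x y))
    (hu₁ : ∀ t x y, u₁ t x y = (deriv a t / a t) * x - (ξ / (a t) ^ 2) * y)
    (hu₂ : ∀ t x y, u₂ t x y = (ξ / (a t) ^ 2) * x + (deriv a t / a t) * y) :
    ∀ t x y, 0 < rad x y →
      (deriv (fun τ => ρ τ x y) t
        + deriv (fun χ => ρ t χ y * u₁ t χ y) x
        + deriv (fun υ => ρ t x υ * u₂ t x υ) y = 0) ∧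
      (ρ t x y * (deriv (fun τ => u₁ τ x y) t
            + u₁ t x y * deriv (fun χ => u₁ t χ y) x
            + u₂ t x y * deriv (fun υ => u₁ t x υ) y)
        + deriv (fun χ => K * ρ t χ y) x
        + ρ t x y * (x / (rad x y) ^ 2)
            * (2 * π * ∫ η in (0 : ℝ)..(rad x y), ρrad t η * η) = 0) ∧
      (ρ t x y * (deriv (fun τ => u₂ τ x y) t
            + u₁ t x y * deriv (fun χ => u₂ t χ y) x
            + u₂ t x y * deriv (fun υ => u₂ t x υ) y)
        + deriv (fun υ => K * ρ t x υ) y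
        + ρ t x y * (y / (rad x y) ^ 2)
            * (2 * π * ∫ η in (0 : ℝ)..(rad x y), ρrad t η * η) = 0) := by
  have hda : Differentiable ℝ a := hareg.differentiable (by norm_num)
  have hda' : Differentiable ℝ (deriv a) := hareg.differentiable_deriv_two
  obtain rfl : ρ = fun t x y => exp (f (rad x y / a t)) / a t ^ 2 := by
    funext t x y
    rw [hρ, hρrad]
  obtain rfl : u₁ = fun t x y => deriv a t / a t * x - ξ / a t ^ 2 * y := by
    funext t x y
    exact hu₁ t x y
  obtain rfl : u₂ = fun t x y => ξ / a t ^ 2 * x + deriv a t / a t * y := by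
    funext t x y
    exact hu₂ t x y
  intro t x y hr
  have hat : a t ≠ 0 := (hapos t).ne'
  have hs : 0 < rad x y / a t := div_pos hr (hapos t)
  have hf := hfd _ hs
  have hgrav : 2 * π * ∫ η in (0 : ℝ)..rad x y, ρrad t η * η
      = lam * (rad x y / a t) ^ 2 - K * (rad x y / a t * f' (rad x y / a t)) := by
    simp only [hρrad]
    rw [integral_scaled_profile_mul_id (fun s => exp (f s)) hat,
      liouville_first_integral hK.ne' hfc hf'c hfd' hfode hs.le]
  simp only [hgrav]
  exact ⟨continuity_equation_scaled_profile ξ hf.exp (hda t).hasDerivAt hat hr.ne',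
    momentum_equation_fst (hda t).hasDerivAt (hda' t).hasDerivAt hat (haode t) hf hr.ne',
    momentum_equation_snd (hda t).hasDerivAt (hda' t).hasDerivAt hat (haode t) hf hr.ne'⟩

/-- With `a` a positive C² solution of the Emden equation
`a'' = −λ/a + ξ²/a³` and `f` a C² solution on `[0,∞)` of the Liouville equation
`f'' + f'/s + (2π/K)e^f = 2λ/K` with `f'(0) = 0`, the triple
`ρ(t,x,y) = e^{f(r/a(t))}/a(t)²`, `u₁ = (a'/a)x − (ξ/a²)y`, `u₂ = (ξ/a²)x + (a'/a)y`
is a classical solution of the 2D isothermal Euler–Poisson system wherever `r > 0`: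
the continuity equation and both momentum equations (pressure `P = Kρ`, radial
self-gravity) hold. -/
theorem rotational_solution_isothermal_euler_poisson
    (K lam ξ : ℝ) (hK : 0 < K) (hξ : ξ ≠ 0)
    (a : ℝ → ℝ) (hareg : ContDiff ℝ 2 a) (hapos : ∀ t, 0 < a t)
    (haode : ∀ t, deriv (deriv a) t = -lam / a t + ξ ^ 2 / (a t) ^ 3)
    (f f' f'' : ℝ → ℝ)
    (hfc : ContinuousOn f (Set.Ici 0))
    (hf'c : ContinuousOn f' (Set.Ici 0))
    (hf''c : ContinuousOn f'' (Set.Ici 0))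
    (hfd : ∀ s ∈ Set.Ioi (0 : ℝ), HasDerivAt f (f' s) s)
    (hfd' : ∀ s ∈ Set.Ioi (0 : ℝ), HasDerivAt f' (f'' s) s)
    (hf'0 : f' 0 = 0)
    (hfode : ∀ s ∈ Set.Ioi (0 : ℝ),
      f'' s + f' s / s + (2 * π / K) * Real.exp (f s) = 2 * lam / K)
    (ρrad : ℝ → ℝ → ℝ) (ρ u₁ u₂ : ℝ → ℝ → ℝ → ℝ)
    (hρrad : ∀ t r, ρrad t r = Real.exp (f (r / a t)) / (a t) ^ 2)
    (hρ : ∀ t x y, ρ t x y = ρrad t (rad x y))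
    (hu₁ : ∀ t x y, u₁ t x y = (deriv a t / a t) * x - (ξ / (a t) ^ 2) * y)
    (hu₂ : ∀ t x y, u₂ t x y = (ξ / (a t) ^ 2) * x + (deriv a t / a t) * y) :
    ∀ t x y, 0 < rad x y →
      (deriv (fun τ => ρ τ x y) t
        + deriv (fun χ => ρ t χ y * u₁ t χ y) x
        + deriv (fun υ => ρ t x υ * u₂ t x υ) y = 0) ∧
      (ρ t x y * (deriv (fun τ => u₁ τ x y) t
            + u₁ t x y * deriv (fun χ => u₁ t χ y) x
            + u₂ t x y * deriv (fun υ => u₁ t x υ) y)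
        + deriv (fun χ => K * ρ t χ y) x
        + ρ t x y * (x / (rad x y) ^ 2)
            * (2 * π * ∫ η in (0 : ℝ)..(rad x y), ρrad t η * η) = 0) ∧
      (ρ t x y * (deriv (fun τ => u₂ τ x y) t
            + u₁ t x y * deriv (fun χ => u₂ t χ y) x
            + u₂ t x y * deriv (fun υ => u₂ t x υ) y)
        + deriv (fun υ => K * ρ t x υ) y
        + ρ t x y * (y / (rad x y) ^ 2)
            * (2 * π * ∫ η in (0 : ℝ)..(rad x y), ρrad t η * η) = 0) :=
  rotational_solution_isothermal_euler_poisson_general K lam ξ hK a hareg hapos haode f f' f'' hfc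
    hf'c hfd hfd' hfode ρrad ρ u₁ u₂ hρrad hρ hu₁ hu₂
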